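/- arXiv:0710.4885 — 3 statements merged into one kernel-verified Lean document; each statement's English description precedes it below -/
import Mathlib

section
/- Let R be a commutative ring, n and m natural numbers with m ≤ n, and B an n × n matrix over R. Then det(B) equals the sum, over all subsets T of {0, 1, …, n−1} of cardinality m, of (−1)^(m(m−1)/2 + Σ_{j∈T} j) · det(B restricted to rows {0, …, m−1} and columns T, with columns taken in increasing order) · det(B restricted to rows {m, …, n−1} and columns {0,…,n−1} \ T, with columns taken in increasing order). (Laplace expansion by complementary minors along the first m rows; this is the precise form of the paper's Lemma 1.) -/
/-!
Expand `det B = ∑ σ, sign σ * ∏ i, B i (σ i)` and group the permutations `σ` by the column set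
`T = σ {0, …, m - 1}`. Every `σ` factors uniquely as a permutation of each of the row blocks
`{0, …, m - 1}` and `{m, …, n - 1}`, followed by the shuffle sending these blocks increasingly onto
`T` and `Tᶜ`; both sides of this correspondence have `n!` elements, and the block permutations
produce the two complementary minors.

The shuffle of `T` has sign `(-1) ^ (m(m-1)/2 + ∑ T)`: replacing some `v ∈ T` with `v - 1 ∉ T`
composes the shuffle with the transposition `(v - 1, v)` and lowers `∑ T` by one, and when no such
move exists, `T = {0, …, m - 1}` and the shuffle is the identity.
-/

open Finset Equiv

theorem strictMonoOn_swap_of_covBy {α : Type*} [LinearOrder α] {u v : α} {s : Set α}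
    (huv : u ⋖ v) (hs : ¬(u ∈ s ∧ v ∈ s)) : StrictMonoOn (swap u v) s := by
  intro x hx y hy hxy
  have hle : ∀ {c}, u < c → v ≤ c := huv.ge_of_gt
  have hge : ∀ {c}, c < v → c ≤ u := huv.le_of_lt
  have hlt := huv.lt
  simp only [swap_apply_def]
  split_ifs <;> grind

theorem Finset.orderEmbOfFin_eq_comp {α β : Type*} [LinearOrder α] [LinearOrder β] {k : ℕ}
    {s : Finset α} {t : Finset β} (hs : s.card = k) (ht : t.card = k) {f : α → β}
    (hf : StrictMonoOn f s) (hst : Set.MapsTo f s t) :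
    ⇑(t.orderEmbOfFin ht) = f ∘ s.orderEmbOfFin hs :=
  (orderEmbOfFin_unique ht (fun i => hst (orderEmbOfFin_mem s hs i))
    fun _ _ hij => hf (orderEmbOfFin_mem s hs _) (orderEmbOfFin_mem s hs _)
      ((s.orderEmbOfFin hs).strictMono hij)).symm

theorem Matrix.det_eq_sum_sign_mul_prod_apply {ι R : Type*} [Fintype ι] [DecidableEq ι]
    [CommRing R] (M : Matrix ι ι R) :
    M.det = ∑ σ : Perm ι, (Perm.sign σ : R) * ∏ i, M i (σ i) := by
  rw [← M.det_transpose, Matrix.det_apply']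
  rfl

namespace Finset

variable {n m : ℕ}

theorem card_compl_of_card_eq {S : Finset (Fin n)} (hS : S.card = m) : Sᶜ.card = n - m := by
  rw [card_compl, Fintype.card_fin, hS]

def shuffleEquiv (S : Finset (Fin n)) (hS : S.card = m) : Fin m ⊕ Fin (n - m) ≃ Fin n :=
  ((S.orderIsoOfFin hS).toEquiv.sumCongr
    ((Sᶜ.orderIsoOfFin (card_compl_of_card_eq hS)).toEquiv.trans
      (subtypeEquivRight fun _ => mem_compl))).trans (sumCompl (· ∈ S))

@[simp]
theorem shuffleEquiv_inl (S : Finset (Fin n)) (hS : S.card = m) (a : Fin m) :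
    S.shuffleEquiv hS (.inl a) = S.orderEmbOfFin hS a := rfl

@[simp]
theorem shuffleEquiv_inr (S : Finset (Fin n)) (hS : S.card = m) (b : Fin (n - m)) :
    S.shuffleEquiv hS (.inr b) = Sᶜ.orderEmbOfFin (card_compl_of_card_eq hS) b := rfl

theorem range_sumCongr_trans_shuffleEquiv_inl (S : Finset (Fin n)) (hS : S.card = m)
    (α : Perm (Fin m)) (β : Perm (Fin (n - m))) :
    Set.range (fun a => ((α.sumCongr β).trans (S.shuffleEquiv hS)) (.inl a)) = S :=
  (α.surjective.range_comp _).trans (range_orderEmbOfFin S hS)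

theorem shuffleEquiv_map_swap {S : Finset (Fin n)} (hS : S.card = m) {u v : Fin n}
    (huv : u ⋖ v) (hu : u ∉ S) (hv : v ∈ S) :
    (S.map (swap u v).toEmbedding).shuffleEquiv ((card_map _).trans hS) =
      (S.shuffleEquiv hS).trans (swap u v) := by
  ext (a | b) : 2
  · simp only [shuffleEquiv_inl, trans_apply]
    rw [orderEmbOfFin_eq_comp hS _ (strictMonoOn_swap_of_covBy huv (by simp [hu]))
      fun x hx => by simpa using hx]
    rfl
  · simp only [shuffleEquiv_inr, trans_apply]
    rw [orderEmbOfFin_eq_comp (card_compl_of_card_eq hS) _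
      (strictMonoOn_swap_of_covBy huv (by simp [hv])) fun x hx => by simpa [mem_map_equiv] using hx]
    rfl

theorem sum_map_swap_add_one {S : Finset (Fin n)} {u v : Fin n} (huv : u ⋖ v) (hu : u ∉ S)
    (hv : v ∈ S) : ∑ x ∈ S.map (swap u v).toEmbedding, (x : ℕ) + 1 = ∑ x ∈ S, (x : ℕ) := by
  have hfix : ∀ x ∈ S.erase v, (swap u v x : ℕ) = x := fun x hx => by
    rw [swap_apply_of_ne_of_ne (ne_of_mem_of_not_mem (mem_of_mem_erase hx) hu)
      (ne_of_mem_erase hx)]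
  have hsucc : (u : ℕ) + 1 = v := Nat.covBy_iff_add_one_eq.mp (Fin.covBy_iff.mp huv)
  rw [sum_map, ← add_sum_erase S _ hv, ← add_sum_erase S _ hv]
  simp only [Equiv.coe_toEmbedding, swap_apply_right]
  rw [sum_congr rfl hfix, ← hsucc]
  ring

theorem card_filter_val_lt_of_le (hm : m ≤ n) : #({i | (i : ℕ) < m} : Finset (Fin n)) = m := by
  rw [Fin.card_filter_val_lt, min_eq_right hm]

theorem sum_filter_val_lt (hm : m ≤ n) :
    ∑ i ∈ ({i | (i : ℕ) < m} : Finset (Fin n)), (i : ℕ) = m * (m - 1) / 2 := by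
  have : ({i | (i : ℕ) < m} : Finset (Fin n)) = univ.map (Fin.castLEEmb hm) := by
    ext i
    simp only [mem_filter, mem_univ, true_and, mem_map, Fin.castLEEmb_apply]
    refine ⟨fun h => ⟨⟨i, h⟩, rfl⟩, ?_⟩
    rintro ⟨a, rfl⟩
    exact a.isLt
  rw [this, sum_map, ← sum_range_id]
  exact Fin.sum_univ_eq_sum_range (fun i => i) m

theorem orderEmbOfFin_filter_val_lt (hm : m ≤ n) (a : Fin m) :
    ({i | (i : ℕ) < m} : Finset (Fin n)).orderEmbOfFin (card_filter_val_lt_of_le hm) a =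
      Fin.castLE hm a := by
  rw [← orderEmbOfFin_unique _ (f := Fin.castLE hm) (by simp) (Fin.strictMono_castLE hm)]

theorem orderEmbOfFin_compl_filter_val_lt (hm : m ≤ n) (b : Fin (n - m)) :
    ({i | (i : ℕ) < m} : Finset (Fin n))ᶜ.orderEmbOfFin
        (card_compl_of_card_eq (card_filter_val_lt_of_le hm)) b = ⟨m + b, by omega⟩ := by
  have hshift := orderEmbOfFin_unique (card_compl_of_card_eq (card_filter_val_lt_of_le hm))
    (f := fun b : Fin (n - m) => (⟨m + b, by omega⟩ : Fin n))
    (fun b => by simp only [mem_compl, mem_filter, mem_univ, true_and, not_lt]; omega)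
    (fun b c h => Fin.mk_lt_mk.mpr (Nat.add_lt_add_left h m))
  rw [← hshift]

theorem exists_covBy_notMem_mem {S : Finset (Fin n)} (hS : S.card = m)
    (hne : S ≠ ({i | (i : ℕ) < m} : Finset (Fin n))) : ∃ u v, u ⋖ v ∧ u ∉ S ∧ v ∈ S := by
  by_contra! hclosed
  have hlower : ∀ x ∈ S, ∀ y ≤ x, y ∈ S := by
    intro x hx y hyx
    obtain ⟨d, hd⟩ := Nat.exists_eq_add_of_le (Fin.le_def.mp hyx)
    induction d generalizing y with
    | zero => rwa [← Fin.ext hd]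
    | succ d ih =>
      by_contra hyS
      let y' : Fin n := ⟨y + 1, by omega⟩
      have hcov : y ⋖ y' := by simp [y', Fin.covBy_iff]
      exact hclosed y y' hcov hyS (ih y' (Fin.le_def.mpr (by simp [y']; omega)) (by simp [y']; omega))
  refine hne (eq_of_subset_of_card_le (fun x hx => ?_) ?_)
  · have hcard := card_le_card fun y hy => hlower x hx y (mem_Iic.mp hy)
    rw [Fin.card_Iic, hS] at hcard
    simpa using hcard
  · rw [Fin.card_filter_val_lt, hS]; exact min_le_right n m

def shufflePerm (hm : m ≤ n) (S : Finset (Fin n)) (hS : S.card = m) : Perm (Fin n) :=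
  (shuffleEquiv {i | (i : ℕ) < m} (card_filter_val_lt_of_le hm)).symm.trans (S.shuffleEquiv hS)

theorem sign_shufflePerm (hm : m ≤ n) (S : Finset (Fin n)) (hS : S.card = m) :
    Perm.sign (shufflePerm hm S hS) = (-1) ^ (m * (m - 1) / 2 + ∑ j ∈ S, (j : ℕ)) := by
  induction hN : ∑ j ∈ S, (j : ℕ) using Nat.strong_induction_on generalizing S with
  | _ N ih =>
  by_cases hI : S = ({i | (i : ℕ) < m} : Finset (Fin n))
  · subst hI
    rw [← hN, sum_filter_val_lt hm, ← two_mul, pow_mul]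
    simp [shufflePerm]
  obtain ⟨u, v, huv, hu, hv⟩ := exists_covBy_notMem_mem hS hI
  set S' := S.map (swap u v).toEmbedding
  have hS' : S'.card = m := (card_map _).trans hS
  have hswap : shufflePerm hm S' hS' = swap u v * shufflePerm hm S hS := by
    rw [shufflePerm, shuffleEquiv_map_swap hS huv hu hv]
    rfl
  have hsum : ∑ j ∈ S', (j : ℕ) + 1 = ∑ j ∈ S, (j : ℕ) := sum_map_swap_add_one huv hu hv
  have hsign' := ih _ (by omega) S' hS' rfl
  rw [hswap, Perm.sign_mul, Perm.sign_swap huv.lt.ne] at hsign'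
  rw [← hN, ← hsum, ← add_assoc, pow_succ, ← hsign']
  simp

end Finset

section LaplacePerm

variable {n m : ℕ}

theorem sumCongr_trans_shuffleEquiv_injective :
    Function.Injective fun x : Σ _ : powersetCard m (univ : Finset (Fin n)),
        Perm (Fin m) × Perm (Fin (n - m)) =>
      (x.2.1.sumCongr x.2.2).trans (x.1.1.shuffleEquiv (mem_powersetCard.mp x.1.2).2) := by
  rintro ⟨T, α, β⟩ ⟨T', α', β'⟩ h
  obtain rfl : T = T' := by
    refine Subtype.ext (coe_injective ?_)
    rw [← range_sumCongr_trans_shuffleEquiv_inl T (mem_powersetCard.mp T.2).2 α β,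
      ← range_sumCongr_trans_shuffleEquiv_inl T' (mem_powersetCard.mp T'.2).2 α' β']
    simp only at h
    rw [h]
  have hsum : α.sumCongr β = α'.sumCongr β' :=
    Equiv.ext fun z => (T.1.shuffleEquiv _).injective (Equiv.congr_fun h z)
  obtain ⟨rfl, rfl⟩ := Prod.ext_iff.mp
    (Perm.sumCongrHom_injective (a₁ := (α, β)) (a₂ := (α', β')) hsum)
  rfl

def laplacePerm (hm : m ≤ n)
    (x : Σ _ : powersetCard m (univ : Finset (Fin n)), Perm (Fin m) × Perm (Fin (n - m))) :
    Perm (Fin n) :=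
  (shuffleEquiv {i | (i : ℕ) < m} (card_filter_val_lt_of_le hm)).symm.trans
    ((x.2.1.sumCongr x.2.2).trans (x.1.1.shuffleEquiv (mem_powersetCard.mp x.1.2).2))

theorem laplacePerm_bijective (hm : m ≤ n) : Function.Bijective (laplacePerm hm) := by
  rw [Fintype.bijective_iff_injective_and_card]
  refine ⟨fun x y h => sumCongr_trans_shuffleEquiv_injective ?_, ?_⟩
  · refine Equiv.ext fun z => ?_
    simpa [laplacePerm] using Equiv.congr_fun h (shuffleEquiv _ (card_filter_val_lt_of_le hm) z)
  · simp [Fintype.card_sigma, Fintype.card_perm, ← Nat.choose_mul_factorial_mul_factorial hm]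
    ring

theorem sign_laplacePerm (hm : m ≤ n) (T : powersetCard m (univ : Finset (Fin n)))
    (α : Perm (Fin m)) (β : Perm (Fin (n - m))) :
    Perm.sign (laplacePerm hm ⟨T, α, β⟩) =
      (-1) ^ (m * (m - 1) / 2 + ∑ j ∈ T.1, (j : ℕ)) * (Perm.sign α * Perm.sign β) := by
  have hsplit : laplacePerm hm ⟨T, α, β⟩ = shufflePerm hm T.1 (mem_powersetCard.mp T.2).2 *
      (shuffleEquiv _ (card_filter_val_lt_of_le hm)).permCongr (α.sumCongr β) :=
    Equiv.ext fun z => by simp [laplacePerm, shufflePerm, permCongr_apply]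
  rw [hsplit, Perm.sign_mul, sign_shufflePerm, Perm.sign_permCongr, Perm.sign_sumCongr]

theorem prod_apply_laplacePerm {M : Type*} [CommMonoid M] (hm : m ≤ n)
    (T : powersetCard m (univ : Finset (Fin n))) (α : Perm (Fin m)) (β : Perm (Fin (n - m)))
    (f : Fin n → Fin n → M) :
    ∏ i, f i (laplacePerm hm ⟨T, α, β⟩ i) =
      (∏ a, f (Fin.castLE hm a) (T.1.orderEmbOfFin (mem_powersetCard.mp T.2).2 (α a))) *
        ∏ b : Fin (n - m), f ⟨m + b, by omega⟩
          (T.1ᶜ.orderEmbOfFin (card_compl_of_card_eq (mem_powersetCard.mp T.2).2) (β b)) := by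
  rw [← (shuffleEquiv _ (card_filter_val_lt_of_le hm)).prod_comp, Fintype.prod_sum_type]
  simp only [laplacePerm, trans_apply, symm_apply_apply]
  simp only [sumCongr_apply, Sum.map_inl, Sum.map_inr, shuffleEquiv_inl, shuffleEquiv_inr,
    orderEmbOfFin_filter_val_lt hm, orderEmbOfFin_compl_filter_val_lt hm]

end LaplacePerm

/-- **Laplace expansion by complementary minors along the first `m` rows.**
For an `n × n` matrix `B` over a commutative ring `R` and `m ≤ n`,
`det B` is the sum over all column subsets `T` of cardinality `m` of
`(-1) ^ (m(m-1)/2 + Σ_{j ∈ T} j)` times the minor of `B` on the first `m` rows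
and the columns `T` (in increasing order), times the minor of `B` on the last
`n - m` rows and the complementary columns `Tᶜ` (in increasing order). -/
theorem laplace_expansion_first_rows (R : Type*) [CommRing R] (n m : ℕ) (hm : m ≤ n)
    (B : Matrix (Fin n) (Fin n) R) :
    B.det =
      ∑ T ∈ (Finset.powersetCard m (Finset.univ : Finset (Fin n))).attach,
        (-1 : R) ^ (m * (m - 1) / 2 + ∑ j ∈ T.1, (j : ℕ)) *
          (B.submatrix (Fin.castLE hm)
              (T.1.orderEmbOfFin ((Finset.mem_powersetCard.mp T.2).2))).det *
          (B.submatrix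
              (fun i : Fin (n - m) => (⟨m + (i : ℕ), by have := i.isLt; omega⟩ : Fin n))
              ((T.1)ᶜ.orderEmbOfFin (by
                have h := (Finset.mem_powersetCard.mp T.2).2
                simp [Finset.card_compl, h]))).det := by
  rw [B.det_eq_sum_sign_mul_prod_apply, ← (laplacePerm_bijective hm).sum_comp,
    ← univ_sigma_univ, sum_sigma, univ_eq_attach]
  refine sum_congr rfl fun T _ => ?_
  rw [Matrix.det_eq_sum_sign_mul_prod_apply, Matrix.det_eq_sum_sign_mul_prod_apply, mul_assoc,
    sum_mul_sum, mul_sum, Fintype.sum_prod_type]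
  refine sum_congr rfl fun α _ => ?_
  rw [mul_sum]
  refine sum_congr rfl fun β _ => ?_
  rw [sign_laplacePerm, prod_apply_laplacePerm hm T α β B]
  simp only [Matrix.submatrix_apply]
  push_cast
  ring
end

section
/- Let R be a commutative ring, n and m natural numbers with m ≤ n, I a finite index set, (aᵢ)_{i∈I} scalars in R, and (Bᵢ)_{i∈I} a family of n × n matrices over R that all agree on rows m, m+1, …, n−1 (i.e., for every i, i' ∈ I and every row index r ≥ m, row r of Bᵢ equals row r of Bᵢ'). If for every subset T of {0, …, n−1} of cardinality m one has Σ_{i∈I} aᵢ · det(Bᵢ[{0,…,m−1}, T]) = 0, then Σ_{i∈I} aᵢ · det(Bᵢ) = 0. (The paper's Lemma 2: to prove a linear relation among determinants of matrices sharing a common bottom block, it suffices to verify the relation on the corresponding minors of the top blocks.) -/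
/-!
With the rows outside the first `m` fixed, the determinant is an alternating `m`-linear function
of the first `m` rows, so it factors through `⋀^m Rⁿ`. Expanding in the basis `e_T` of
`⋀^m Rⁿ` gives a generalized Laplace expansion `det Bᵢ = Σ_T det Bᵢ[{0,…,m-1}, T] · c_T`
whose coefficients `c_T` depend only on the common bottom rows. Summing with the weights `aᵢ` and
exchanging the sums, the coefficient of each `c_T` vanishes by hypothesis.
-/

open Set.powersetCard

theorem Module.Basis.alternatingMap_apply_eq_sum_det_smul {R M N I : Type*} [CommRing R]
    [AddCommGroup M] [Module R M] [AddCommGroup N] [Module R N] [LinearOrder I] [Fintype I]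
    (b : Module.Basis I R M) {k : ℕ} (f : M [⋀^Fin k]→ₗ[R] N) (v : Fin k → M) :
    f v = ∑ s : Set.powersetCard I k,
      (Matrix.of fun i j => b.coord (ofFinEmbEquiv.symm s j) (v i)).det •
        f (b ∘ ofFinEmbEquiv.symm s) := by
  conv_lhs => rw [← exteriorPower.alternatingMapLinearEquiv_apply_ιMulti f v,
    ← (b.exteriorPower k).sum_repr (exteriorPower.ιMulti R k v)]
  simp [exteriorPower.basis_repr_apply, exteriorPower.ιMulti_family]

theorem AlternatingMap.apply_eq_sum_det_submatrix_smul {R N ι : Type*} [CommRing R]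
    [AddCommGroup N] [Module R N] [LinearOrder ι] [Fintype ι] {k : ℕ}
    (f : (ι → R) [⋀^Fin k]→ₗ[R] N) (v : Fin k → ι → R) :
    f v = ∑ s : Set.powersetCard ι k,
      ((Matrix.of v).submatrix id (s.1.orderEmbOfFin s.2)).det •
        f (fun j => Pi.single (s.1.orderEmbOfFin s.2 j) 1) := by
  rw [(Pi.basisFun R ι).alternatingMap_apply_eq_sum_det_smul f v]
  simp only [ofFinEmbEquiv_symm_apply, Module.Basis.coord_apply, Pi.basisFun_repr,
    Function.comp_def, Pi.basisFun_apply]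
  rfl

namespace Function

theorem Injective.extend_update {α β γ : Type*} [DecidableEq α] [DecidableEq β] {g : α → β}
    (hg : Injective g) (v : α → γ) (e : β → γ) (a : α) (x : γ) :
    extend g (update v a x) e = update (extend g v e) (g a) x := by
  funext b
  by_cases hb : ∃ a', g a' = b
  · obtain ⟨a', rfl⟩ := hb
    simp only [hg.extend_apply, update_apply, hg.eq_iff]
  · rw [update_of_ne (fun h => hb ⟨a, h.symm⟩), extend_apply' _ _ _ hb, extend_apply' _ _ _ hb]

end Function

namespace Matrix

variable {R n ι : Type*} [CommRing R] [Fintype n]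

section DecidableEq

variable [DecidableEq n]

noncomputable def detExtendRows (g : ι ↪ n) (M : Matrix n n R) :
    (n → R) [⋀^ι]→ₗ[R] R where
  toFun v := det (of (Function.extend g v (of.symm M)))
  map_update_add' v j x y := by
    simp only [g.injective.extend_update]
    exact det_updateRow_add _ _ _ _
  map_update_smul' v j c x := by
    simp only [g.injective.extend_update]
    exact det_updateRow_smul _ _ _ _
  map_eq_zero_of_eq' v i j hv hij := by
    refine det_zero_of_row_eq (g.injective.ne hij) ?_
    change Function.extend g v (of.symm M) (g i) = Function.extend g v (of.symm M) (g j)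
    rw [g.injective.extend_apply, g.injective.extend_apply, hv]

theorem detExtendRows_apply (g : ι ↪ n) (M : Matrix n n R) (v : ι → n → R) :
    detExtendRows g M v = det (of (Function.extend g v (of.symm M))) := rfl

theorem detExtendRows_apply_comp_eq_det (g : ι ↪ n) {M N : Matrix n n R}
    (h : ∀ r ∉ Set.range g, M r = N r) : detExtendRows g M (fun j => N (g j)) = N.det := by
  rw [detExtendRows_apply]
  congr 1
  ext r c
  by_cases hr : ∃ j, g j = r
  · obtain ⟨j, rfl⟩ := hr
    simp [g.injective.extend_apply]
  · simp [Function.extend_apply' _ _ _ hr, h r hr]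

end DecidableEq

theorem exists_det_eq_sum_det_submatrix_mul [LinearOrder n] {k : ℕ} (g : Fin k ↪ n)
    (M : Matrix n n R) :
    ∃ c : Set.powersetCard n k → R, ∀ N : Matrix n n R, (∀ r ∉ Set.range g, M r = N r) →
      N.det = ∑ s, (N.submatrix g (s.1.orderEmbOfFin s.2)).det * c s :=
  ⟨fun s => detExtendRows g M fun j => Pi.single (s.1.orderEmbOfFin s.2 j) 1, fun N hN => by
    rw [← detExtendRows_apply_comp_eq_det g hN, AlternatingMap.apply_eq_sum_det_submatrix_smul]
    rfl⟩

end Matrix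

/-- **The paper's Lemma 2.** Let `(Bᵢ)_{i ∈ I}` be a finite family of `n × n`
matrices over a commutative ring `R`, all agreeing on the rows `m, …, n-1`, and
let `(aᵢ)` be scalars.  If for every column subset `T` of cardinality `m` the
linear relation `Σᵢ aᵢ · det Bᵢ[{0,…,m-1}, T] = 0` holds among the top minors,
then `Σᵢ aᵢ · det Bᵢ = 0`. -/
theorem det_linear_relation_of_minor_relation (R : Type*) [CommRing R]
    (n m : ℕ) (hm : m ≤ n) (I : Type*) [Fintype I] (a : I → R)
    (B : I → Matrix (Fin n) (Fin n) R)
    (hrows : ∀ i i' : I, ∀ r : Fin n, m ≤ (r : ℕ) → B i r = B i' r)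
    (hminors : ∀ (T : Finset (Fin n)) (hT : T.card = m),
      ∑ i, a i * ((B i).submatrix (Fin.castLE hm) (T.orderEmbOfFin hT)).det = 0) :
    ∑ i, a i * (B i).det = 0 := by
  rcases isEmpty_or_nonempty I with _ | ⟨⟨i₀⟩⟩
  · simp
  obtain ⟨c, hc⟩ := (B i₀).exists_det_eq_sum_det_submatrix_mul (Fin.castLEEmb hm)
  have hdet (i : I) : (B i).det =
      ∑ T, ((B i).submatrix (Fin.castLE hm) (T.1.orderEmbOfFin T.2)).det * c T :=
    hc (B i) fun r hr => hrows i₀ i r (by simpa [Fin.range_castLE] using hr)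
  calc ∑ i, a i * (B i).det
      = ∑ T, (∑ i, a i * ((B i).submatrix (Fin.castLE hm) (T.1.orderEmbOfFin T.2)).det) *
          c T := by
        simp_rw [hdet, Finset.mul_sum, Finset.sum_mul, mul_assoc]
        exact Finset.sum_comm
    _ = 0 := Finset.sum_eq_zero fun T _ => by rw [hminors T.1 T.2, zero_mul]
end

section
/- Let R be a commutative ring, M an n × n matrix over R, j a fixed column index with j < n, and c, c' : {0,…,n−1} → R two column vectors with c(i) + c'(i) = M i j for every row index i < n. Define the (n+1) × (n+1) matrix M' by: for i < n, M' i l = M i l for every column l < n with l ≠ j, M' i j = c(i), and M' i n = c'(i); and in the last row, M' n j = −1, M' n n = 1, and M' n l = 0 for all other columns l. Then det(M') = det(M). (The paper's claim that splitting a column of the weight-system matrix into two columns summing to it, while adjoining a new row with entries −1 and 1 in the two split columns and 0 elsewhere, does not change the determinant.) -/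
open Matrix

/-! Adding the last column of `M'` to column `j` does not change the determinant; afterwards
column `j` is `c + c'`, the `j`-th column of `M`, and the last row is `(0, …, 0, 1)`, so the
Laplace expansion along that row leaves `det M`. -/

namespace Matrix

theorem det_eq_mul_det_submatrix_castSucc_of_last_row {R : Type*} [CommRing R] {n : ℕ}
    (A : Matrix (Fin (n + 1)) (Fin (n + 1)) R)
    (hrow : ∀ l : Fin n, A (Fin.last n) l.castSucc = 0) :
    A.det = A (Fin.last n) (Fin.last n) * (A.submatrix Fin.castSucc Fin.castSucc).det := by
  rw [det_succ_row A (Fin.last n), Fin.sum_univ_castSucc]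
  simp [hrow, Fin.succAbove_last]

end Matrix

/-- **Splitting a column does not change the determinant.**
Let `M` be an `n × n` matrix over a commutative ring `R`, `j` a column index, and
`c, c'` column vectors with `c i + c' i = M i j` for all `i`.  Form the
`(n+1) × (n+1)` matrix `M'` by replacing column `j` of `M` by `c`, adjoining `c'`
as a new last column, and adjoining a new last row whose entries are `-1` in
column `j`, `1` in the new column, and `0` elsewhere.  Then `det M' = det M`. -/
theorem det_split_column (R : Type*) [CommRing R] (n : ℕ)
    (M : Matrix (Fin n) (Fin n) R) (j : Fin n) (c c' : Fin n → R)
    (hsum : ∀ i : Fin n, c i + c' i = M i j)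
    (M' : Matrix (Fin (n + 1)) (Fin (n + 1)) R)
    (hold : ∀ (i l : Fin n), l ≠ j → M' i.castSucc l.castSucc = M i l)
    (hc : ∀ i : Fin n, M' i.castSucc j.castSucc = c i)
    (hc' : ∀ i : Fin n, M' i.castSucc (Fin.last n) = c' i)
    (hrowj : M' (Fin.last n) j.castSucc = -1)
    (hrowlast : M' (Fin.last n) (Fin.last n) = 1)
    (hrow0 : ∀ l : Fin n, l ≠ j → M' (Fin.last n) l.castSucc = 0) :
    M'.det = M.det := by
  have hj : j.castSucc ≠ Fin.last n := (Fin.castSucc_lt_last j).ne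
  set N := M'.updateCol j.castSucc fun k => M' k j.castSucc + M' k (Fin.last n)
  have hN_last : N (Fin.last n) (Fin.last n) = 1 := by
    simp [N, updateCol_ne hj.symm, hrowlast]
  have hN_row : ∀ l : Fin n, N (Fin.last n) l.castSucc = 0 := by
    intro l
    by_cases hl : l = j
    · simp [N, hl, hrowj, hrowlast]
    · simp [N, updateCol_ne (Fin.castSucc_injective n |>.ne hl), hrow0 l hl]
  have hN_sub : N.submatrix Fin.castSucc Fin.castSucc = M := by
    ext i l
    by_cases hl : l = j
    · simp [N, hl, hc, hc', hsum]
    · simp [N, updateCol_ne (Fin.castSucc_injective n |>.ne hl), hold i l hl]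
  rw [← det_updateCol_add_self M' hj, det_eq_mul_det_submatrix_castSucc_of_last_row N hN_row,
    hN_last, hN_sub, one_mul]
end
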